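/- Let (α, β) ∈ ℚ_p² have an infinite p-adic MCF, with V_n^α = C_n α - A_n, V_n^β = C_n β - B_n. Then min{ν_p(V_n^α), ν_p(V_n^β)} + min{ν_p(V_{n-1}^α), ν_p(V_{n-1}^β)} ≤ K_{n+1}, where K_n = -ν_p(C_n). -/

import Mathlib

/-- The Browkin `s`-function on `ℚ_p`: sends `α` to the truncation of its
`p`-adic expansion (digits in `(-p/2, p/2)`) to non-positive powers of `p`.
It is characterized by: `s α ∈ ℤ[1/p]`, `|s α|_∞ < p/2`, and `|α - s α|_p < 1`. -/
structure BrowkinS (p : ℕ) [Fact (Nat.Prime p)] where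
  s : ℚ_[p] → ℚ
  s_int : ∀ x, ∃ (z : ℤ) (k : ℕ), s x = (z : ℚ) / (p : ℚ) ^ k
  s_bound : ∀ x, |s x| < (p : ℚ) / 2
  s_close : ∀ x, ‖x - (s x : ℚ_[p])‖ < 1

/-- An infinite `p`-adic multidimensional continued fraction (dimension 2),
produced by the `p`-adic Jacobi–Perron algorithm: `al 0 = α`, `be 0 = β`,
`a_n = s(α_n)`, `b_n = s(β_n)`, `α_{n+1} = 1/(β_n - b_n)`,
`β_{n+1} = (α_n - a_n)/(β_n - b_n)`, and the algorithm never stops. -/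
structure PMCF (p : ℕ) [Fact (Nat.Prime p)] where
  s : ℚ_[p] → ℚ
  s_int : ∀ x, ∃ (z : ℤ) (k : ℕ), s x = (z : ℚ) / (p : ℚ) ^ k
  s_bound : ∀ x, |s x| < (p : ℚ) / 2
  s_close : ∀ x, ‖x - (s x : ℚ_[p])‖ < 1
  al : ℕ → ℚ_[p]
  be : ℕ → ℚ_[p]
  ne : ∀ n, be n - (s (be n) : ℚ_[p]) ≠ 0
  ral : ∀ n, al (n + 1) = (be n - (s (be n) : ℚ_[p]))⁻¹
  rbe : ∀ n, be (n + 1) = (al n - (s (al n) : ℚ_[p])) * (be n - (s (be n) : ℚ_[p]))⁻¹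

namespace PMCF

variable {p : ℕ} [Fact (Nat.Prime p)]

/-- Partial quotients `a_n = s(α_n)`. -/
def a (m : PMCF p) (n : ℕ) : ℚ := m.s (m.al n)

/-- Partial quotients `b_n = s(β_n)`. -/
def b (m : PMCF p) (n : ℕ) : ℚ := m.s (m.be n)

/-- Numerators `A`: indices shifted by `2`, so `A (n+2)` is the paper's `A_n`
(`A_{-2} = 0`, `A_{-1} = 1`, `A_0 = a_0`). -/
def A (m : PMCF p) : ℕ → ℚ
  | 0 => 0
  | 1 => 1
  | 2 => a m 0
  | n + 3 => a m (n + 1) * A m (n + 2) + b m (n + 1) * A m (n + 1) + A m n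

/-- Numerators `B` (shifted by `2`): `B_{-2} = 1`, `B_{-1} = 0`, `B_0 = b_0`. -/
def B (m : PMCF p) : ℕ → ℚ
  | 0 => 1
  | 1 => 0
  | 2 => b m 0
  | n + 3 => a m (n + 1) * B m (n + 2) + b m (n + 1) * B m (n + 1) + B m n

/-- Denominators `C` (shifted by `2`): `C_{-2} = 0`, `C_{-1} = 0`, `C_0 = 1`. -/
def C (m : PMCF p) : ℕ → ℚ
  | 0 => 0
  | 1 => 0
  | 2 => 1
  | n + 3 => a m (n + 1) * C m (n + 2) + b m (n + 1) * C m (n + 1) + C m n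

/-- `K_n = k_1 + ⋯ + k_n` where `k_i = ν_p(1/a_i)`. -/
def K (m : PMCF p) (n : ℕ) : ℤ := -∑ i ∈ Finset.Icc 1 n, padicValRat p (a m i)

/-- `k_n = ν_p(1/a_n)`. -/
def kk (m : PMCF p) (n : ℕ) : ℤ := -padicValRat p (a m n)

/-- `V_n^α = C_n α - A_n` (paper indexing). -/
noncomputable def Va (m : PMCF p) (n : ℕ) : ℚ_[p] :=
  ((C m (n + 2) : ℚ) : ℚ_[p]) * m.al 0 - ((A m (n + 2) : ℚ) : ℚ_[p])

/-- `V_n^β = C_n β - B_n` (paper indexing). -/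
noncomputable def Vb (m : PMCF p) (n : ℕ) : ℚ_[p] :=
  ((C m (n + 2) : ℚ) : ℚ_[p]) * m.be 0 - ((B m (n + 2) : ℚ) : ℚ_[p])

end PMCF

/-!
With `X_n = (A_n, B_n, C_n)` and `v = (α, β, 1)`, the quantity
`V^α_{n+1} V^β_n - V^β_{n+1} V^α_n` is the triple product `v ⬝ (X_{n+1} × X_n)`. The Jacobi–Perron
recursion gives `(α_1 ⋯ α_{k+1}) v = α_{k+1} X_k + β_{k+1} X_{k-1} + X_{k-2}`; taking `k = n + 1`,
only `X_{n-1}` survives in the triple product, and the triple product of three consecutive `X`'s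
is the determinant `1` of the initial ones. So the quantity is `(α_1 ⋯ α_{n+2})⁻¹`, of norm `p ^ (-K_{n+2})` since `|α_i|_p = |a_i|_p > 1`. The ultrametric
inequality bounds it by the product of the two maxima.
-/

theorem IsUltrametricDist.norm_mul_sub_mul_le_max_mul_max {R : Type*} [SeminormedRing R]
    [IsUltrametricDist R] (u₁ v₁ u₂ v₂ : R) :
    ‖u₁ * v₂ - v₁ * u₂‖ ≤ max ‖u₁‖ ‖v₁‖ * max ‖u₂‖ ‖v₂‖ := by
  calc ‖u₁ * v₂ - v₁ * u₂‖ ≤ max ‖u₁ * v₂‖ ‖v₁ * u₂‖ := by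
        simpa only [sub_eq_add_neg, norm_neg] using norm_add_le_max (u₁ * v₂) (-(v₁ * u₂))
    _ ≤ max ‖u₁‖ ‖v₁‖ * max ‖u₂‖ ‖v₂‖ := by
        refine max_le ((norm_mul_le _ _).trans ?_) ((norm_mul_le _ _).trans ?_)
        · gcongr <;> simp
        · gcongr <;> simp

open Matrix in
theorem dotProduct_cross_eq_of_recurrence {R : Type*} [CommRing R] {X : ℕ → Fin 3 → R}
    {c d : ℕ → R} (hX : ∀ n, X (n + 3) = c n • X (n + 2) + d n • X (n + 1) + X n) :
    ∀ n, X n ⬝ᵥ X (n + 2) ⨯₃ X (n + 1) = X 0 ⬝ᵥ X 2 ⨯₃ X 1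
  | 0 => rfl
  | n + 1 => by
    rw [← dotProduct_cross_eq_of_recurrence hX n, hX]
    simp only [map_add, map_smul, LinearMap.add_apply, LinearMap.smul_apply, cross_self,
      dotProduct_add, dotProduct_smul, dot_self_cross, smul_zero, zero_add]
    exact triple_product_permutation _ _ _

namespace PMCF

open Matrix

variable {p : ℕ} [Fact (Nat.Prime p)] (m : PMCF p)

lemma al_succ_mul_sub_b (n : ℕ) : m.al (n + 1) * (m.be n - (m.b n : ℚ_[p])) = 1 := by
  rw [m.ral n]
  exact inv_mul_cancel₀ (m.ne n)

lemma be_succ (n : ℕ) : m.be (n + 1) = (m.al n - (m.a n : ℚ_[p])) * m.al (n + 1) := by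
  rw [m.rbe n, m.ral n]
  rfl

lemma one_lt_norm_al_succ (n : ℕ) : 1 < ‖m.al (n + 1)‖ := by
  rw [m.ral n, norm_inv]
  exact (one_lt_inv₀ (norm_pos_iff.mpr (m.ne n))).mpr (m.s_close (m.be n))

lemma norm_a_succ (n : ℕ) : ‖(m.a (n + 1) : ℚ_[p])‖ = ‖m.al (n + 1)‖ := by
  have hclose : ‖(m.a (n + 1) : ℚ_[p]) - m.al (n + 1)‖ < ‖m.al (n + 1)‖ := by
    rw [norm_sub_rev]
    exact (m.s_close _).trans (m.one_lt_norm_al_succ n)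
  simpa [max_eq_left hclose.le] using
    IsUltrametricDist.norm_add_eq_max_of_norm_ne_norm hclose.ne'

lemma norm_al_succ (n : ℕ) : ‖m.al (n + 1)‖ = (p : ℝ) ^ (-padicValRat p (m.a (n + 1))) := by
  have ha : m.a (n + 1) ≠ 0 := by
    have : ‖(m.a (n + 1) : ℚ_[p])‖ ≠ 0 := by
      rw [m.norm_a_succ]
      linarith [m.one_lt_norm_al_succ n]
    exact_mod_cast norm_ne_zero_iff.mp this
  rw [← m.norm_a_succ, Padic.eq_padicNorm, padicNorm.eq_zpow_of_nonzero ha]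
  push_cast
  rfl

noncomputable def alProd (n : ℕ) : ℚ_[p] := ∏ i ∈ Finset.Icc 1 n, m.al i

lemma norm_alProd (n : ℕ) : ‖m.alProd n‖ = (p : ℝ) ^ m.K n := by
  induction n with
  | zero => simp [alProd, K]
  | succ n ih =>
    have hp : (p : ℝ) ≠ 0 := Nat.cast_ne_zero.mpr (Fact.out : p.Prime).ne_zero
    rw [alProd, Finset.prod_Icc_succ_top (by omega), norm_mul, ← alProd, ih, norm_al_succ,
      ← zpow_add₀ hp, K, K, Finset.sum_Icc_succ_top (by omega), neg_add]

noncomputable def convergentVec (n : ℕ) : Fin 3 → ℚ_[p] := ![(m.A n : ℚ_[p]), m.B n, m.C n]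

noncomputable def initialVec : Fin 3 → ℚ_[p] := ![m.al 0, m.be 0, 1]

lemma convergentVec_add_three (n : ℕ) :
    m.convergentVec (n + 3) = (m.a (n + 1) : ℚ_[p]) • m.convergentVec (n + 2)
      + (m.b (n + 1) : ℚ_[p]) • m.convergentVec (n + 1) + m.convergentVec n := by
  ext i
  fin_cases i <;> simp [convergentVec, A, B, C]

lemma convergentVec_triple_product (n : ℕ) :
    m.convergentVec n ⬝ᵥ m.convergentVec (n + 2) ⨯₃ m.convergentVec (n + 1) = 1 := by
  rw [dotProduct_cross_eq_of_recurrence m.convergentVec_add_three]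
  simp [convergentVec, A, B, C, cross_apply]

lemma alProd_smul_initialVec (n : ℕ) :
    m.alProd (n + 1) • m.initialVec = m.al (n + 1) • m.convergentVec (n + 2)
      + m.be (n + 1) • m.convergentVec (n + 1) + m.convergentVec n := by
  induction n with
  | zero =>
    have hβ := m.al_succ_mul_sub_b 0
    ext i
    fin_cases i <;> simp [alProd, initialVec, convergentVec, A, B, C, m.be_succ 0]
    · ring
    · linear_combination hβ
  | succ n ih =>
    rw [alProd, Finset.prod_Icc_succ_top (by omega), ← alProd, mul_comm, mul_smul, ih,
      convergentVec_add_three, m.be_succ (n + 1)]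
    linear_combination (norm := module) m.al_succ_mul_sub_b (n + 1) • m.convergentVec (n + 1)

lemma Va_mul_Vb_sub_Vb_mul_Va (n : ℕ) :
    m.Va (n + 1) * m.Vb n - m.Vb (n + 1) * m.Va n = (m.alProd (n + 2))⁻¹ := by
  have hcross : m.Va (n + 1) * m.Vb n - m.Vb (n + 1) * m.Va n
      = m.initialVec ⬝ᵥ m.convergentVec (n + 3) ⨯₃ m.convergentVec (n + 2) := by
    simp [Va, Vb, initialVec, convergentVec, cross_apply]
    ring
  refine hcross ▸ (eq_inv_of_mul_eq_one_right ?_)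
  calc m.alProd (n + 2) * (m.initialVec ⬝ᵥ m.convergentVec (n + 3) ⨯₃ m.convergentVec (n + 2))
      = (m.alProd (n + 2) • m.initialVec) ⬝ᵥ m.convergentVec (n + 3) ⨯₃ m.convergentVec (n + 2) :=
        by rw [smul_dotProduct, smul_eq_mul]
    _ = m.convergentVec (n + 1) ⬝ᵥ m.convergentVec (n + 3) ⨯₃ m.convergentVec (n + 2) := by
        simp only [alProd_smul_initialVec, add_dotProduct, smul_dotProduct, dot_self_cross,
          dot_cross_self, smul_zero, zero_add]
    _ = 1 := m.convergentVec_triple_product (n + 1)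

end PMCF

theorem pmcf_V_valuation_upper_bound_general (p : ℕ) [Fact (Nat.Prime p)]
    (m : PMCF p) (n : ℕ) :
    (p : ℝ) ^ (-(PMCF.K m (n + 2))) ≤
      max ‖PMCF.Va m (n + 1)‖ ‖PMCF.Vb m (n + 1)‖ * max ‖PMCF.Va m n‖ ‖PMCF.Vb m n‖ := by
  calc (p : ℝ) ^ (-(PMCF.K m (n + 2))) = ‖(m.alProd (n + 2))⁻¹‖ := by
        rw [norm_inv, m.norm_alProd, zpow_neg]
    _ = ‖m.Va (n + 1) * m.Vb n - m.Vb (n + 1) * m.Va n‖ := by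
        rw [m.Va_mul_Vb_sub_Vb_mul_Va]
    _ ≤ _ := IsUltrametricDist.norm_mul_sub_mul_le_max_mul_max _ _ _ _

/-- Upper bound: `min{ν_p(V_n^α), ν_p(V_n^β)} + min{ν_p(V_{n-1}^α), ν_p(V_{n-1}^β)} ≤ K_{n+1}`
(stated with `n` replaced by `n + 1` and via the `p`-adic norm:
`p^{-K_{n+2}} ≤ max{|V_{n+1}^α|, |V_{n+1}^β|} ⋅ max{|V_n^α|, |V_n^β|}`). -/
theorem pmcf_V_valuation_upper_bound (p : ℕ) [Fact (Nat.Prime p)] (hp : Odd p)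
    (m : PMCF p) (n : ℕ) :
    (p : ℝ) ^ (-(PMCF.K m (n + 2))) ≤
      max ‖PMCF.Va m (n + 1)‖ ‖PMCF.Vb m (n + 1)‖ * max ‖PMCF.Va m n‖ ‖PMCF.Vb m n‖ :=
  pmcf_V_valuation_upper_bound_general p m n
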